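/- Let F be a field and R = F⟨x,y⟩ the free associative F-algebra on two noncommuting generators x, y. For each n ≥ 1, the two-sided ideal Pₙ generated by the monomials {x·yⁱ·x : 0 ≤ i ≤ n−1} (so Pₙ = ⟨xx, xyx, xy²x, …, xyⁿ⁻¹x⟩) is a prime two-sided ideal of R. -/

import Mathlib

open List

/-! ### List combinatorics -/

/-- The forbidden words `x yⁱ x`. -/
def forb (i : ℕ) : List (Fin 2) := 0 :: (List.replicate i 1 ++ [0])

/-- A word is bad iff it contains some `x yⁱ x`, `i < n`, as a factor. -/
def IsBad (n : ℕ) (w : FreeMonoid (Fin 2)) : Prop :=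
  ∃ i < n, forb i <:+: FreeMonoid.toList w

theorem prefix_split {α : Type*} {s l₁ l₂ : List α} (h : s <+: l₁ ++ l₂) :
    s <+: l₁ ∨ ∃ s₂, s = l₁ ++ s₂ ∧ s₂ <+: l₂ := by
  rcases prefix_or_prefix_of_prefix h (l₁.prefix_append l₂) with h' | h'
  · exact Or.inl h'
  · obtain ⟨s₂, rfl⟩ := h'
    exact Or.inr ⟨s₂, rfl, (List.prefix_append_right_inj l₁).1 h⟩

theorem infix_split {α : Type*} {s l₁ l₂ : List α} (h : s <:+: l₁ ++ l₂) :
    s <:+: l₁ ∨ s <:+: l₂ ∨ ∃ s₁ s₂, s = s₁ ++ s₂ ∧ s₁ <:+ l₁ ∧ s₂ <+: l₂ := by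
  induction l₁ with
  | nil => exact Or.inr (Or.inl h)
  | cons a l₁ ih =>
    rw [List.cons_append, List.infix_cons_iff] at h
    rcases h with h | h
    · rw [← List.cons_append] at h
      rcases prefix_split h with h' | ⟨s₂, rfl, h₂⟩
      · exact Or.inl h'.isInfix
      · exact Or.inr (Or.inr ⟨a :: l₁, s₂, rfl, suffix_rfl, h₂⟩)
    · rcases ih h with h' | h' | ⟨s₁, s₂, rfl, h₁, h₂⟩
      · exact Or.inl (h'.trans (l₁.suffix_cons a).isInfix)
      · exact Or.inr (Or.inl h')
      · exact Or.inr (Or.inr ⟨s₁, s₂, rfl, h₁.trans (l₁.suffix_cons a), h₂⟩)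

theorem mem_prefix_replicate_append {s z : List (Fin 2)} {N : ℕ}
    (h : s <+: List.replicate N 1 ++ z) (hlen : s.length ≤ N) : ∀ a ∈ s, a = 1 := by
  intro a ha
  have h1 : s <+: List.replicate N (1 : Fin 2) := by
    have := List.prefix_iff_eq_take.1 h
    rw [List.take_append_of_le_length (by simpa using hlen)] at this
    exact this ▸ List.take_prefix _ _
  exact List.eq_of_mem_replicate (h1.sublist.mem ha)

theorem forb_ne_nil (i : ℕ) : forb i ≠ [] := by simp [forb]

theorem zero_mem_forb (i : ℕ) : (0 : Fin 2) ∈ forb i := by simp [forb]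

theorem singleton_zero_suffix_forb (i : ℕ) : [(0 : Fin 2)] <:+ forb i :=
  ⟨0 :: List.replicate i 1, by simp [forb]⟩

/-- If `forb i = s₁ ++ s₂` where all the elements of `s₂` are `1`, then `s₂ = []`. -/
theorem forb_eq_append_all_one {i : ℕ} {s₁ s₂ : List (Fin 2)}
    (h : forb i = s₁ ++ s₂) (h2 : ∀ a ∈ s₂, a = 1) : s₂ = [] := by
  rcases List.eq_nil_or_concat' s₂ with rfl | ⟨s₂', a, rfl⟩
  · rfl
  · exfalso
    have hsuf : [(0 : Fin 2)] <:+ s₂' ++ [a] := by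
      have h1 : s₂' ++ [a] <:+ forb i := ⟨s₁, h.symm⟩
      exact List.suffix_of_suffix_length_le (singleton_zero_suffix_forb i) h1 (by simp)
    have : (0 : Fin 2) ∈ s₂' ++ [a] := hsuf.sublist.mem (by simp)
    have := h2 _ this
    exact absurd this (by decide)

/-- If `forb i = s₁ ++ s₂` where `s₁` is nonempty and all its elements are `1`,
contradiction (since `forb` starts with `0`). -/
theorem forb_eq_append_all_one_left {i : ℕ} {s₁ s₂ : List (Fin 2)}
    (h : forb i = s₁ ++ s₂) (h1 : ∀ a ∈ s₁, a = 1) : s₁ = [] := by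
  cases s₁ with
  | nil => rfl
  | cons a s₁' =>
    exfalso
    have : a = (0 : Fin 2) := by
      have := h.symm
      rw [List.cons_append] at this
      unfold forb at this
      exact (List.head_eq_of_cons_eq this).symm ▸ rfl
    have := h1 a (by simp)
    rw [this] at ‹a = 0›
    exact absurd ‹(1 : Fin 2) = 0› (by decide)

theorem not_forb_infix_replicate {i N : ℕ} (h : forb i <:+: List.replicate N (1 : Fin 2)) :
    False := by
  have := List.eq_of_mem_replicate (h.sublist.mem (zero_mem_forb i))
  exact absurd this (by decide)

theorem not_forb_prefix_replicate_append {i n N : ℕ} (hi : i < n) (hnN : n ≤ N) {z : List (Fin 2)}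
    (h : forb i <+: List.replicate N 1 ++ z) : False := by
  -- case on length
  rcases le_or_gt (forb i).length N with hle | hlt
  · have := mem_prefix_replicate_append h hle (0 : Fin 2) (zero_mem_forb i)
    exact absurd this (by decide)
  · -- the head of the rhs is 1, of lhs is 0
    obtain ⟨M, rfl⟩ : ∃ M, N = M + 1 := ⟨N - 1, by omega⟩
    obtain ⟨r, hr⟩ := h
    rw [List.replicate_succ, List.cons_append] at hr
    unfold forb at hr
    rw [List.cons_append] at hr
    have := List.head_eq_of_cons_eq hr
    exact absurd this (by decide)

theorem not_forb_prefix_cons {i n N : ℕ} (hi : i < n) (hnN : n ≤ N) {v : List (Fin 2)}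
    (h : forb i <+: 0 :: (List.replicate N 1 ++ v)) : False := by
  obtain ⟨r, hr⟩ := h
  unfold forb at hr
  rw [List.cons_append] at hr
  have h2 : (List.replicate i 1 ++ [0]) ++ r = List.replicate N (1 : Fin 2) ++ v :=
    List.tail_eq_of_cons_eq hr
  have hpre : List.replicate i 1 ++ [(0 : Fin 2)] <+: List.replicate N 1 ++ v := ⟨r, h2⟩
  have := mem_prefix_replicate_append hpre (by simp <;> omega) (0 : Fin 2) (by simp)
  exact absurd this (by decide)

theorem not_forb_infix_mid {n N : ℕ} (hnN : n ≤ N) {u v : List (Fin 2)}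
    (hu : ∀ i < n, ¬ forb i <:+: u) (hv : ∀ i < n, ¬ forb i <:+: v) {i : ℕ} (hi : i < n)
    (h : forb i <:+: u ++ (List.replicate N 1 ++ 0 :: (List.replicate N 1 ++ v))) : False := by
  have hmid : ∀ (h' : forb i <:+: List.replicate N 1 ++ 0 :: (List.replicate N 1 ++ v)), False := by
    intro h'
    rcases infix_split h' with h1 | h1 | ⟨s₁, s₂, heq, hs₁, hs₂⟩
    · exact not_forb_infix_replicate h1
    · rw [List.infix_cons_iff] at h1
      rcases h1 with h1 | h1
      · exact not_forb_prefix_cons hi hnN h1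
      · rcases infix_split h1 with h2 | h2 | ⟨s₁, s₂, heq, hs₁, hs₂⟩
        · exact not_forb_infix_replicate h2
        · exact hv i hi h2
        · have hone : ∀ a ∈ s₁, a = (1 : Fin 2) :=
            fun a ha => List.eq_of_mem_replicate (hs₁.sublist.mem ha)
          have : s₁ = [] := forb_eq_append_all_one_left heq hone
          subst this
          rw [List.nil_append] at heq
          exact hv i hi (heq ▸ hs₂.isInfix)
    · have hone : ∀ a ∈ s₁, a = (1 : Fin 2) :=
        fun a ha => List.eq_of_mem_replicate (hs₁.sublist.mem ha)
      have : s₁ = [] := forb_eq_append_all_one_left heq hone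
      subst this
      rw [List.nil_append] at heq
      exact not_forb_prefix_cons hi hnN (heq ▸ hs₂)
  rcases infix_split h with h1 | h1 | ⟨s₁, s₂, heq, hs₁, hs₂⟩
  · exact hu i hi h1
  · exact hmid h1
  · rcases le_or_gt s₂.length N with hle | hlt
    · have hone := mem_prefix_replicate_append (by simpa using hs₂) hle
      have : s₂ = [] := forb_eq_append_all_one heq hone
      subst this
      rw [List.append_nil] at heq
      exact hu i hi (heq ▸ hs₁.isInfix)
    · have hlen : (forb i).length = i + 2 := by simp [forb]
      have hlen2 : s₁.length + s₂.length = i + 2 := by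
        rw [← List.length_append, ← heq, hlen]
      have : s₁ = [] := List.eq_nil_of_length_eq_zero (by omega)
      subst this
      rw [List.nil_append] at heq
      exact not_forb_prefix_replicate_append hi hnN (heq ▸ hs₂)

theorem mid_getElem_N {N : ℕ} {v : List (Fin 2)} :
    (((List.replicate N 1 ++ 0 :: List.replicate N 1) ++ v))[N]? = some 0 := by
  rw [List.getElem?_append_left (by simp <;> omega), List.getElem?_append_right (by simp)]
  simp

theorem mid_cancel {N : ℕ} {s v v' : List (Fin 2)} (hs : s.length ≤ N) (hne : s ≠ [])
    (h : s ++ ((List.replicate N 1 ++ 0 :: List.replicate N 1) ++ v)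
       = (List.replicate N 1 ++ 0 :: List.replicate N 1) ++ v') : False := by
  have hpos : 0 < s.length := List.length_pos_iff.2 hne
  have h1 : (s ++ ((List.replicate N (1 : Fin 2) ++ 0 :: List.replicate N 1) ++ v))[N]?
      = some 1 := by
    rw [List.getElem?_append_right hs, List.getElem?_append_left (by simp <;> omega),
      List.getElem?_append_left (by simp <;> omega)]
    have : N - s.length < N := by omega
    simp [List.getElem?_replicate, this]
  rw [h, mid_getElem_N] at h1
  exact absurd h1 (by decide)

theorem uniq_mid {N : ℕ} {u u' v v' : List (Fin 2)} (hu : u.length < N) (hu' : u'.length < N)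
    (h : u ++ ((List.replicate N 1 ++ 0 :: List.replicate N 1) ++ v)
       = u' ++ ((List.replicate N 1 ++ 0 :: List.replicate N 1) ++ v')) :
    u = u' ∧ v = v' := by
  have key : ∀ (u u' v v' : List (Fin 2)), u'.length ≤ u.length → u.length < N →
      u ++ ((List.replicate N 1 ++ 0 :: List.replicate N 1) ++ v)
        = u' ++ ((List.replicate N 1 ++ 0 :: List.replicate N 1) ++ v') → u = u' := by
    intro u u' v v' hle hlt heq
    have hpre : u' <+: u := by
      refine List.prefix_of_prefix_length_le ⟨_, heq.symm⟩ ⟨_, rfl⟩ hle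
    obtain ⟨s, rfl⟩ := hpre
    rcases eq_or_ne s [] with rfl | hne
    · rw [List.append_nil]
    · exfalso
      rw [List.append_assoc] at heq
      have heq' := List.append_cancel_left heq
      exact mid_cancel (by simp at hlt ⊢; omega) hne heq'
  have huu' : u = u' := by
    rcases le_or_gt u'.length u.length with hle | hlt
    · exact key u u' v v' hle hu h
    · exact (key u' u v' v hlt.le hu' h.symm).symm
  subst huu'
  exact ⟨rfl, by simpa using List.append_cancel_left (List.append_cancel_left h)⟩

/-! ### Algebra -/

noncomputable section AlgebraPart

variable (F : Type*) [Field F]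

/-- The identification of the free algebra with the monoid algebra of the free monoid. -/
def eqv : FreeAlgebra F (Fin 2) ≃ₐ[F] MonoidAlgebra F (FreeMonoid (Fin 2)) :=
  FreeAlgebra.equivMonoidAlgebraFreeMonoid

theorem eqv_ι (m : Fin 2) :
    eqv F (FreeAlgebra.ι F m) = MonoidAlgebra.single (FreeMonoid.of m) 1 := by
  simp [eqv, FreeAlgebra.equivMonoidAlgebraFreeMonoid, MonoidAlgebra.of_apply]

theorem of_pow (i : ℕ) :
    (FreeMonoid.of (1 : Fin 2)) ^ i = FreeMonoid.ofList (List.replicate i 1) := by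
  induction i with
  | zero => rfl
  | succ i ih =>
    rw [pow_succ, ih, List.replicate_succ' , FreeMonoid.ofList_append, FreeMonoid.ofList_singleton]

/-- The generators of the ideal. -/
def gen (i : ℕ) : FreeAlgebra F (Fin 2) :=
  FreeAlgebra.ι F (0 : Fin 2) * (FreeAlgebra.ι F (1 : Fin 2)) ^ i * FreeAlgebra.ι F (0 : Fin 2)

theorem ofList_forb (i : ℕ) :
    FreeMonoid.ofList (forb i)
      = FreeMonoid.of (0 : Fin 2) * FreeMonoid.of (1 : Fin 2) ^ i * FreeMonoid.of (0 : Fin 2) := by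
  rw [of_pow]
  apply FreeMonoid.toList.injective
  simp [forb, FreeMonoid.toList_mul]

theorem eqv_gen (i : ℕ) :
    eqv F (gen F i) = MonoidAlgebra.single (FreeMonoid.ofList (forb i)) 1 := by
  rw [gen, map_mul, map_mul, map_pow, eqv_ι, eqv_ι, ofList_forb, MonoidAlgebra.single_pow,
    MonoidAlgebra.single_mul_single, MonoidAlgebra.single_mul_single]
  simp

instance : DecidableEq (FreeMonoid (Fin 2)) := Classical.decEq _

theorem isBad_mul_left {n : ℕ} (u : FreeMonoid (Fin 2)) {v : FreeMonoid (Fin 2)}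
    (h : IsBad n v) : IsBad n (u * v) := by
  obtain ⟨i, hi, hinf⟩ := h
  refine ⟨i, hi, ?_⟩
  rw [FreeMonoid.toList_mul]
  exact hinf.trans (List.suffix_append _ _).isInfix

theorem isBad_mul_right {n : ℕ} {u : FreeMonoid (Fin 2)} (v : FreeMonoid (Fin 2))
    (h : IsBad n u) : IsBad n (u * v) := by
  obtain ⟨i, hi, hinf⟩ := h
  refine ⟨i, hi, ?_⟩
  rw [FreeMonoid.toList_mul]
  exact hinf.trans (List.prefix_append _ _).isInfix

/-- The two-sided ideal of elements all of whose monomials are bad. -/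
def badIdeal (n : ℕ) : TwoSidedIdeal (FreeAlgebra F (Fin 2)) :=
  TwoSidedIdeal.mk' {x | ∀ w ∈ (eqv F x).coeff.support, IsBad n w}
    (by simp)
    (by
      intro x y hx hy w hw
      rw [map_add, MonoidAlgebra.coeff_add] at hw
      rcases Finset.mem_union.1 (Finsupp.support_add hw) with h | h
      exacts [hx w h, hy w h])
    (by
      intro x hx w hw
      rw [map_neg, MonoidAlgebra.coeff_neg, Finsupp.support_neg] at hw
      exact hx w hw)
    (by
      intro x y hy w hw
      rw [map_mul] at hw
      obtain ⟨a, ha, b, hb, rfl⟩ := Finset.mem_mul.1 (MonoidAlgebra.support_coeff_mul_subset _ _ hw)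
      exact isBad_mul_left a (hy b hb))
    (by
      intro x y hx w hw
      rw [map_mul] at hw
      obtain ⟨a, ha, b, hb, rfl⟩ := Finset.mem_mul.1 (MonoidAlgebra.support_coeff_mul_subset _ _ hw)
      exact isBad_mul_right b (hx a ha))

theorem mem_badIdeal {n : ℕ} {x : FreeAlgebra F (Fin 2)} :
    x ∈ badIdeal F n ↔ ∀ w ∈ (eqv F x).coeff.support, IsBad n w := by
  unfold badIdeal
  exact TwoSidedIdeal.mem_mk' _ _ _ _ _ _ x

theorem allBad_mem {n : ℕ} (f : MonoidAlgebra F (FreeMonoid (Fin 2)))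
    (hf : ∀ w ∈ f.coeff.support, IsBad n w) :
    (eqv F).symm f ∈ TwoSidedIdeal.span {m | ∃ i < n, m = gen F i} := by
  set P := TwoSidedIdeal.span {m | ∃ i < n, m = gen F i} with hP
  induction f using MonoidAlgebra.induction with
  | zero => rw [map_zero]; exact TwoSidedIdeal.zero_mem P
  | single_add a b f hafsupp hb ih =>
    have hsupp : (MonoidAlgebra.single a b + f).coeff.support = _ :=
      Finsupp.support_single_add hafsupp hb
    have hbada : IsBad n a := hf a (by rw [hsupp]; exact Finset.mem_cons_self a _)
    have hff : ∀ w ∈ f.coeff.support, IsBad n w := fun w hw =>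
      hf w (by rw [hsupp]; exact Finset.mem_cons_of_mem hw)
    rw [map_add]
    refine TwoSidedIdeal.add_mem P ?_ (ih hff)
    obtain ⟨i, hi, l, r, hlr⟩ := hbada
    have ha' : a = FreeMonoid.ofList l * FreeMonoid.ofList (forb i) * FreeMonoid.ofList r := by
      apply FreeMonoid.toList.injective
      rw [← hlr]
      simp [FreeMonoid.toList_mul]
    have hsingle : (MonoidAlgebra.single a b : MonoidAlgebra F (FreeMonoid (Fin 2)))
        = MonoidAlgebra.single (FreeMonoid.ofList l) b
          * MonoidAlgebra.single (FreeMonoid.ofList (forb i)) 1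
          * MonoidAlgebra.single (FreeMonoid.ofList r) 1 := by
      rw [MonoidAlgebra.single_mul_single, MonoidAlgebra.single_mul_single, ha']
      simp
    rw [hsingle, map_mul, map_mul]
    have hgenmem : (eqv F).symm (MonoidAlgebra.single (FreeMonoid.ofList (forb i)) 1) ∈ P := by
      rw [← eqv_gen, AlgEquiv.symm_apply_apply]
      exact TwoSidedIdeal.subset_span ⟨i, hi, rfl⟩
    exact TwoSidedIdeal.mul_mem_right P _ _ (TwoSidedIdeal.mul_mem_left P _ _ hgenmem)

theorem mem_span_iff_allBad {n : ℕ} (x : FreeAlgebra F (Fin 2)) :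
    x ∈ TwoSidedIdeal.span {m | ∃ i < n, m = gen F i}
      ↔ ∀ w ∈ (eqv F x).coeff.support, IsBad n w := by
  constructor
  · intro hx
    refine (mem_badIdeal F).1 (TwoSidedIdeal.mem_span_iff.1 hx (badIdeal F n) ?_)
    rintro m ⟨i, hi, rfl⟩
    rw [SetLike.mem_coe, mem_badIdeal]
    intro w hw
    rw [eqv_gen, MonoidAlgebra.coeff_single] at hw
    have := Finsupp.support_single_subset hw
    rw [Finset.mem_singleton] at this
    subst this
    exact ⟨i, hi, by rw [FreeMonoid.toList_ofList]⟩
  · intro hx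
    have := allBad_mem F (eqv F x) hx
    rwa [AlgEquiv.symm_apply_apply] at this

end AlgebraPart

noncomputable section CoeffPart

variable {F : Type*} [Field F]

theorem mul_single_coeff (f : MonoidAlgebra F (FreeMonoid (Fin 2)))
    (t u' : FreeMonoid (Fin 2)) :
    (f * MonoidAlgebra.single t (1 : F)).coeff (u' * t) = f.coeff u' := by
  rw [MonoidAlgebra.coeff_mul_single_eq_coeff_mul (x := f) (m := t) (m₁ := u' * t) u'
    (fun a _ => ⟨fun h => mul_right_cancel h, fun h => by rw [h]⟩), mul_one]

theorem coeff_eq {f g : MonoidAlgebra F (FreeMonoid (Fin 2))} {t u v : FreeMonoid (Fin 2)}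
    (hu : u ∈ f.coeff.support) (hv : v ∈ g.coeff.support)
    (huniq : ∀ u' ∈ f.coeff.support, ∀ v' ∈ g.coeff.support, u' * t * v' = u * t * v → u' = u ∧ v' = v) :
    (f * MonoidAlgebra.single t (1 : F) * g).coeff (u * t * v) = f.coeff u * g.coeff v := by
  set h := f * MonoidAlgebra.single t (1 : F) with hh
  have hmem : u * t ∈ h.coeff.support := by
    rw [Finsupp.mem_support_iff, hh, mul_single_coeff]
    exact Finsupp.mem_support_iff.1 hu
  rw [MonoidAlgebra.coeff_mul, Finsupp.sum]
  rw [Finset.sum_eq_single_of_mem (u * t) hmem ?_]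
  · rw [Finsupp.sum, Finset.sum_eq_single_of_mem v hv ?_]
    · rw [if_pos rfl, hh, mul_single_coeff]
    · intro b hb hbv
      rw [if_neg]
      intro hc
      exact hbv (mul_left_cancel hc)
  · intro a ha hane
    apply Finset.sum_eq_zero
    intro b hb
    beta_reduce
    rw [if_neg]
    intro hc
    obtain ⟨u'', hu'', rfl⟩ := Finset.mem_image.1 (MonoidAlgebra.support_coeff_mul_single_subset f 1 t ha)
    obtain ⟨h1, h2⟩ := huniq u'' hu'' b hb hc
    exact hane (by rw [h1])

end CoeffPart

/-- A two-sided ideal `P` of a ring `R` is prime if `P ≠ R` and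
`aRb ⊆ P` implies `a ∈ P` or `b ∈ P`. -/
def IsPrimeTSI {R : Type*} [Ring R] (P : TwoSidedIdeal R) : Prop :=
  P ≠ ⊤ ∧ ∀ a b : R, (∀ r : R, a * r * b ∈ P) → a ∈ P ∨ b ∈ P

/-- In the free algebra `R = F⟨x,y⟩`, for every `n ≥ 1` the two-sided ideal
`Pₙ = ⟨x yⁱ x : 0 ≤ i ≤ n-1⟩` is prime. -/
theorem stmt_1 (F : Type*) [Field F] (n : ℕ) (hn : 1 ≤ n) :
    IsPrimeTSI (R := FreeAlgebra F (Fin 2))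
      (TwoSidedIdeal.span
        {m | ∃ i < n, m = FreeAlgebra.ι F (0 : Fin 2) * (FreeAlgebra.ι F (1 : Fin 2)) ^ i *
          FreeAlgebra.ι F (0 : Fin 2)}) := by
  have hset : {m | ∃ i < n, m = FreeAlgebra.ι F (0 : Fin 2) * (FreeAlgebra.ι F (1 : Fin 2)) ^ i *
      FreeAlgebra.ι F (0 : Fin 2)} = {m | ∃ i < n, m = gen F i} := rfl
  rw [hset]
  constructor
  · -- the ideal is proper
    intro htop
    have h1 : (1 : FreeAlgebra F (Fin 2)) ∈ TwoSidedIdeal.span {m | ∃ i < n, m = gen F i} := by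
      rw [htop]; exact TwoSidedIdeal.mem_top _
    rw [mem_span_iff_allBad] at h1
    have hbad : IsBad n (1 : FreeMonoid (Fin 2)) := by
      apply h1
      rw [map_one, MonoidAlgebra.one_def, MonoidAlgebra.coeff_single, Finsupp.support_single_ne_zero _ one_ne_zero]
      exact Finset.mem_singleton_self _
    obtain ⟨i, hi, hinf⟩ := hbad
    have : FreeMonoid.toList (1 : FreeMonoid (Fin 2)) = [] := rfl
    rw [this, List.infix_nil] at hinf
    exact forb_ne_nil i hinf
  · intro a b hab
    by_contra hcon
    push_neg at hcon
    obtain ⟨ha, hb⟩ := hcon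
    rw [mem_span_iff_allBad] at ha hb
    push_neg at ha hb
    obtain ⟨u, hu, hbadu⟩ := ha
    obtain ⟨v, hv, hbadv⟩ := hb
    set N := n + ((eqv F a).coeff.support.sup fun w => (FreeMonoid.toList w).length) + 1 with hN
    have hnN : n ≤ N := by omega
    have hlt : ∀ u' ∈ (eqv F a).coeff.support, (FreeMonoid.toList u').length < N := by
      intro u' hu'
      have := Finset.le_sup (f := fun w => (FreeMonoid.toList w).length) hu'
      beta_reduce at this
      omega
    set t : FreeMonoid (Fin 2) :=
      FreeMonoid.ofList (List.replicate N 1 ++ 0 :: List.replicate N 1) with ht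
    have key := hab ((eqv F).symm (MonoidAlgebra.single t (1 : F)))
    rw [mem_span_iff_allBad] at key
    have hmap : eqv F (a * (eqv F).symm (MonoidAlgebra.single t (1 : F)) * b)
        = eqv F a * MonoidAlgebra.single t (1 : F) * eqv F b := by
      rw [map_mul, map_mul, AlgEquiv.apply_symm_apply]
    have huniq : ∀ u' ∈ (eqv F a).coeff.support, ∀ v' ∈ (eqv F b).coeff.support,
        u' * t * v' = u * t * v → u' = u ∧ v' = v := by
      intro u' hu' v' hv' heq
      have heq2 : FreeMonoid.toList u'
            ++ ((List.replicate N 1 ++ 0 :: List.replicate N 1) ++ FreeMonoid.toList v')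
          = FreeMonoid.toList u
            ++ ((List.replicate N 1 ++ 0 :: List.replicate N 1) ++ FreeMonoid.toList v) := by
        have h3 := congrArg FreeMonoid.toList heq
        simp only [FreeMonoid.toList_mul, ht, FreeMonoid.toList_ofList, List.append_assoc] at h3 ⊢
        exact h3
      obtain ⟨h1, h2⟩ := uniq_mid (hlt u' hu') (hlt u hu) heq2
      exact ⟨FreeMonoid.toList.injective h1, FreeMonoid.toList.injective h2⟩
    have hco := coeff_eq hu hv huniq
    have hne : (eqv F a * MonoidAlgebra.single t (1 : F) * eqv F b).coeff (u * t * v) ≠ 0 := by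
      rw [hco]
      exact mul_ne_zero (Finsupp.mem_support_iff.1 hu) (Finsupp.mem_support_iff.1 hv)
    have hmem : u * t * v ∈
        (eqv F (a * (eqv F).symm (MonoidAlgebra.single t (1 : F)) * b)).coeff.support := by
      rw [hmap]
      exact Finsupp.mem_support_iff.2 hne
    obtain ⟨i, hi, hinf⟩ := key _ hmem
    refine not_forb_infix_mid hnN (fun j hj h => hbadu ⟨j, hj, h⟩)
      (fun j hj h => hbadv ⟨j, hj, h⟩) hi ?_
    simp only [FreeMonoid.toList_mul, ht, FreeMonoid.toList_ofList, List.append_assoc,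
      List.cons_append] at hinf ⊢
    exact hinf
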